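/- arXiv:2003.07222 — 2 statements merged into one kernel-verified Lean document; each statement's English description precedes it below -/
import Mathlib

section
/- Let X be a complex Banach space, T a bounded linear operator on X with ‖T‖ ≤ 1, and P a bounded projection (P ∘ P = P) on X with ‖P‖ ≤ 1 and PT = TP = P. Assume T is uniformly P-ergodic. Then δ_P(T) = r(T − P) if and only if δ_P(Tⁿ) = (δ_P(T))ⁿ for all n ∈ ℕ, n ≥ 1. -/
/-!
Write `A = T - P`, so that `A ^ n = T ^ n - P` for `n ≥ 1`. On `ker P` the operators `A ^ n` and
`T ^ n` agree, and `x = (x - P x) + P x` with `x - P x ∈ ker P`; hence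
`δ_P(T ^ n) ≤ ‖A ^ n‖ ≤ (1 + ‖P‖) δ_P(T ^ n)`. Since `δ_P` is submultiplicative along powers of `T`,
`‖A ^ (n k)‖ ≤ (1 + ‖P‖) δ_P(T ^ n) ^ k`, and Gelfand's formula yields
`r(A) ^ n ≤ δ_P(T ^ n) ≤ δ_P(T) ^ n`. If `δ_P(T) = r(A)` the two ends coincide. Conversely, if
`δ_P(T ^ n) = δ_P(T) ^ n` for all `n`, then `δ_P(T) ^ n ≤ ‖A ^ n‖`, and Gelfand's formula gives
`δ_P(T) ≤ r(A)`.
-/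

open Filter Topology

/-- The generalized Dobrushin ergodicity coefficient of `T` with respect to `P`:
`δ_P(T) = sup {‖T x‖ : P x = 0, ‖x‖ ≤ 1}`. -/
noncomputable def dobrushinCoeff {X : Type*} [NormedAddCommGroup X] [NormedSpace ℂ X]
    (P T : X →L[ℂ] X) : ℝ :=
  sSup {r : ℝ | ∃ x : X, P x = 0 ∧ ‖x‖ ≤ 1 ∧ r = ‖T x‖}

section Idempotent

variable {R : Type*} [Ring R] {p t : R}

lemma mul_pow_eq_of_mul_eq (h : p * t = p) (n : ℕ) : p * t ^ n = p := by
  induction n with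
  | zero => simp
  | succ n ih => rw [pow_succ, ← mul_assoc, ih, h]

lemma pow_mul_eq_of_mul_eq (h : t * p = p) (n : ℕ) : t ^ n * p = p := by
  induction n with
  | zero => simp
  | succ n ih => rw [pow_succ, mul_assoc, h, ih]

lemma sub_pow_eq_pow_sub (hp : p * p = p) (hpt : p * t = p) (htp : t * p = p) {n : ℕ}
    (hn : n ≠ 0) : (t - p) ^ n = t ^ n - p := by
  induction n with
  | zero => exact absurd rfl hn
  | succ n ih =>
    rcases eq_or_ne n 0 with rfl | hn'
    · simp
    rw [pow_succ, ih hn', sub_mul, mul_sub, mul_sub, ← pow_succ, pow_mul_eq_of_mul_eq htp, hpt, hp,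
      sub_self, sub_zero]

end Idempotent

section Dobrushin

variable {X : Type*} [NormedAddCommGroup X] [NormedSpace ℂ X] (P S : X →L[ℂ] X)

lemma dobrushinCoeff_eq_norm_comp_subtypeL :
    dobrushinCoeff P S = ‖S.comp P.toLinearMap.ker.subtypeL‖ := by
  rw [← ContinuousLinearMap.sSup_unitClosedBall_eq_norm, dobrushinCoeff]
  congr 1
  ext r
  constructor
  · rintro ⟨x, hx, hx1, rfl⟩
    exact ⟨⟨x, hx⟩, mem_closedBall_zero_iff.2 hx1, rfl⟩
  · rintro ⟨x, hx1, rfl⟩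
    exact ⟨x, x.2, mem_closedBall_zero_iff.1 hx1, rfl⟩

lemma dobrushinCoeff_nonneg : 0 ≤ dobrushinCoeff P S := by
  rw [dobrushinCoeff_eq_norm_comp_subtypeL]
  positivity

variable {P} in
lemma norm_apply_le_dobrushinCoeff_mul {x : X} (hx : P x = 0) :
    ‖S x‖ ≤ dobrushinCoeff P S * ‖x‖ := by
  rw [dobrushinCoeff_eq_norm_comp_subtypeL]
  exact (S.comp P.toLinearMap.ker.subtypeL).le_opNorm ⟨x, hx⟩

lemma dobrushinCoeff_le_norm_sub : dobrushinCoeff P S ≤ ‖S - P‖ := by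
  have hcomp : S.comp P.toLinearMap.ker.subtypeL = (S - P).comp P.toLinearMap.ker.subtypeL := by
    ext x
    simp
  rw [dobrushinCoeff_eq_norm_comp_subtypeL, hcomp]
  calc ‖(S - P).comp P.toLinearMap.ker.subtypeL‖
      ≤ ‖S - P‖ * ‖P.toLinearMap.ker.subtypeL‖ := ContinuousLinearMap.opNorm_comp_le _ _
    _ ≤ ‖S - P‖ := mul_le_of_le_one_right (norm_nonneg _) (Submodule.norm_subtypeL_le _)

lemma norm_sub_le_mul_dobrushinCoeff (hP : P * P = P) (hSP : S * P = P) :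
    ‖S - P‖ ≤ (1 + ‖P‖) * dobrushinCoeff P S := by
  refine ContinuousLinearMap.opNorm_le_bound _
    (mul_nonneg (by positivity) (dobrushinCoeff_nonneg P S)) fun x => ?_
  have hker : P (x - P x) = 0 := by
    rw [map_sub, ← mul_apply_eq_comp, hP, sub_self]
  have hval : (S - P) x = S (x - P x) := by
    rw [map_sub, ← mul_apply_eq_comp S P, hSP, sub_apply]
  calc ‖(S - P) x‖ = ‖S (x - P x)‖ := by rw [hval]
    _ ≤ dobrushinCoeff P S * ‖x - P x‖ := norm_apply_le_dobrushinCoeff_mul S hker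
    _ ≤ dobrushinCoeff P S * ((1 + ‖P‖) * ‖x‖) := by
      gcongr
      · exact dobrushinCoeff_nonneg P S
      calc ‖x - P x‖ ≤ ‖x‖ + ‖P x‖ := norm_sub_le _ _
        _ ≤ ‖x‖ + ‖P‖ * ‖x‖ := by gcongr; exact P.le_opNorm x
        _ = (1 + ‖P‖) * ‖x‖ := by ring
    _ = (1 + ‖P‖) * dobrushinCoeff P S * ‖x‖ := by ring

lemma dobrushinCoeff_mul_le (S' : X →L[ℂ] X) (hPS' : P * S' = P) :
    dobrushinCoeff P (S * S') ≤ dobrushinCoeff P S * dobrushinCoeff P S' := by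
  rw [dobrushinCoeff_eq_norm_comp_subtypeL P (S * S')]
  refine ContinuousLinearMap.opNorm_le_bound _
    (mul_nonneg (dobrushinCoeff_nonneg P S) (dobrushinCoeff_nonneg P S')) fun x => ?_
  have hS'x : P (S' x) = 0 := by
    rw [← mul_apply_eq_comp, hPS']
    exact x.2
  calc ‖S (S' x)‖ ≤ dobrushinCoeff P S * ‖S' x‖ := norm_apply_le_dobrushinCoeff_mul S hS'x
    _ ≤ dobrushinCoeff P S * (dobrushinCoeff P S' * ‖x‖) := by
      gcongr
      · exact dobrushinCoeff_nonneg P S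
      · exact norm_apply_le_dobrushinCoeff_mul S' x.2
    _ = dobrushinCoeff P S * dobrushinCoeff P S' * ‖x‖ := by ring

lemma dobrushinCoeff_pow_le (hPS : P * S = P) (n : ℕ) :
    dobrushinCoeff P (S ^ n) ≤ dobrushinCoeff P S ^ n := by
  induction n with
  | zero =>
    rw [pow_zero, pow_zero, dobrushinCoeff_eq_norm_comp_subtypeL, ContinuousLinearMap.one_def,
      ContinuousLinearMap.id_comp]
    exact Submodule.norm_subtypeL_le _
  | succ n ih =>
    calc dobrushinCoeff P (S ^ (n + 1)) ≤ dobrushinCoeff P (S ^ n) * dobrushinCoeff P S := by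
          rw [pow_succ]; exact dobrushinCoeff_mul_le P _ S hPS
      _ ≤ dobrushinCoeff P S ^ n * dobrushinCoeff P S := by
          gcongr; exact dobrushinCoeff_nonneg P S
      _ = dobrushinCoeff P S ^ (n + 1) := (pow_succ _ _).symm

end Dobrushin

section SpectralRadius

variable {A : Type*} [NormedRing A] [NormedAlgebra ℂ A] [CompleteSpace A]

lemma spectralRadius_le_ofReal_of_norm_pow_le {a : A} {C c : ℝ} (hC : 0 < C) (hc : 0 ≤ c)
    (h : ∀ k : ℕ, 1 ≤ k → ‖a ^ k‖ ≤ C * c ^ k) :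
    spectralRadius ℂ a ≤ ENNReal.ofReal c := by
  have hroot : Tendsto (fun k : ℕ => C ^ (1 / k : ℝ) * c) atTop (𝓝 c) := by
    have := tendsto_const_nhds.rpow tendsto_one_div_atTop_nhds_zero_nat (Or.inl hC.ne')
    simpa using this.mul_const c
  refine le_of_tendsto_of_tendsto (spectrum.pow_norm_pow_one_div_tendsto_nhds_spectralRadius a)
    (ENNReal.tendsto_ofReal hroot) ?_
  filter_upwards [eventually_ge_atTop 1] with k hk
  refine ENNReal.ofReal_le_ofReal ?_
  calc ‖a ^ k‖ ^ (1 / k : ℝ) ≤ (C * c ^ k) ^ (1 / k : ℝ) := by gcongr; exact h k hk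
    _ = C ^ (1 / k : ℝ) * c := by
      rw [Real.mul_rpow hC.le (by positivity), one_div, Real.pow_rpow_inv_natCast hc (by omega)]

lemma ofReal_le_spectralRadius_of_pow_le_norm {a : A} {c : ℝ}
    (h : ∀ k : ℕ, 1 ≤ k → c ^ k ≤ ‖a ^ k‖) :
    ENNReal.ofReal c ≤ spectralRadius ℂ a := by
  rcases lt_or_ge c 0 with hc | hc
  · simp [ENNReal.ofReal_of_nonpos hc.le]
  refine ge_of_tendsto (spectrum.pow_norm_pow_one_div_tendsto_nhds_spectralRadius a) ?_
  filter_upwards [eventually_ge_atTop 1] with k hk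
  refine ENNReal.ofReal_le_ofReal ?_
  calc c = (c ^ k) ^ (1 / k : ℝ) := by rw [one_div, Real.pow_rpow_inv_natCast hc (by omega)]
    _ ≤ ‖a ^ k‖ ^ (1 / k : ℝ) := by gcongr; exact h k hk

end SpectralRadius

lemma spectralRadius_sub_pow_le_dobrushinCoeff {X : Type*} [NormedAddCommGroup X]
    [NormedSpace ℂ X] [CompleteSpace X] {T P : X →L[ℂ] X} (hP : P * P = P)
    (hPT : P * T = P) (hTP : T * P = P) {n : ℕ} (hn : n ≠ 0) :
    spectralRadius ℂ (T - P) ^ n ≤ ENNReal.ofReal (dobrushinCoeff P (T ^ n)) := by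
  refine (spectrum.spectralRadius_pow_le _ n hn).trans
    (spectralRadius_le_ofReal_of_norm_pow_le (C := 1 + ‖P‖) (by positivity)
      (dobrushinCoeff_nonneg P _) fun k hk => ?_)
  calc ‖((T - P) ^ n) ^ k‖ = ‖T ^ (n * k) - P‖ := by
        rw [← pow_mul, sub_pow_eq_pow_sub hP hPT hTP (by positivity)]
    _ ≤ (1 + ‖P‖) * dobrushinCoeff P (T ^ (n * k)) :=
        norm_sub_le_mul_dobrushinCoeff P _ hP (pow_mul_eq_of_mul_eq hTP _)
    _ ≤ (1 + ‖P‖) * dobrushinCoeff P (T ^ n) ^ k := by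
        rw [pow_mul]
        gcongr
        exact dobrushinCoeff_pow_le P _ (mul_pow_eq_of_mul_eq hPT n) k

theorem stmt4_general {X : Type*} [NormedAddCommGroup X] [NormedSpace ℂ X] [CompleteSpace X]
    (T P : X →L[ℂ] X)
    (hProj : P.comp P = P) (hPT : P.comp T = P) (hTP : T.comp P = P) :
    dobrushinCoeff P T = (spectralRadius ℂ (T - P)).toReal ↔
      ∀ n : ℕ, 1 ≤ n → dobrushinCoeff P (T ^ n) = (dobrushinCoeff P T) ^ n := by
  have hradius {n : ℕ} (hn : 1 ≤ n) :
      spectralRadius ℂ (T - P) ^ n ≤ ENNReal.ofReal (dobrushinCoeff P (T ^ n)) :=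
    spectralRadius_sub_pow_le_dobrushinCoeff hProj hPT hTP (by omega)
  constructor
  · intro hδ n hn
    refine le_antisymm (dobrushinCoeff_pow_le P T hPT n) ?_
    rw [hδ, ← ENNReal.toReal_pow]
    exact ENNReal.toReal_le_of_le_ofReal (dobrushinCoeff_nonneg P _) (hradius hn)
  · intro hmul
    have hδ : spectralRadius ℂ (T - P) = ENNReal.ofReal (dobrushinCoeff P T) := by
      refine le_antisymm (by simpa using hradius le_rfl)
        (ofReal_le_spectralRadius_of_pow_le_norm fun k hk => ?_)
      rw [← hmul k hk, sub_pow_eq_pow_sub hProj hPT hTP (by omega)]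
      exact dobrushinCoeff_le_norm_sub P _
    rw [hδ, ENNReal.toReal_ofReal (dobrushinCoeff_nonneg P T)]

theorem stmt4 {X : Type*} [NormedAddCommGroup X] [NormedSpace ℂ X] [CompleteSpace X]
    (T P : X →L[ℂ] X) (hT : ‖T‖ ≤ 1) (hPnorm : ‖P‖ ≤ 1)
    (hProj : P.comp P = P) (hPT : P.comp T = P) (hTP : T.comp P = P)
    (hErg : Tendsto (fun n : ℕ => ‖T ^ n - P‖) atTop (𝓝 0)) :
    dobrushinCoeff P T = (spectralRadius ℂ (T - P)).toReal ↔
      ∀ n : ℕ, 1 ≤ n → dobrushinCoeff P (T ^ n) = (dobrushinCoeff P T) ^ n :=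
  stmt4_general T P hProj hPT hTP
end

section
/- Let X be a complex Banach space, T a bounded linear operator on X with ‖T‖ ≤ 1, and P a bounded projection (P ∘ P = P) on X with ‖P‖ ≤ 1, PT = TP, and TP = P. Then T is weakly P-ergodic (i.e. δ_P(Tⁿ) → 0 as n → ∞) if and only if r(T − P) < 1. -/
/-!
Since `T P = P T = P = P²`, one has `(T - P)ⁿ⁺¹ = Tⁿ⁺¹ - P`. On the other hand
`δ_P(S) ≤ ‖S - P‖ ≤ (1 + ‖P‖) δ_P(S)` whenever `S P = P`, because `S - P = S (1 - P)` and
`1 - P` maps into `ker P`. Hence weak `P`-ergodicity is equivalent to `‖(T - P)ⁿ‖ → 0`, which by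
Gelfand's formula is equivalent to `r(T - P) < 1`.
-/

open Filter Topology

section Ring

variable {R : Type*} [Ring R] {t p : R}

theorem pow_mul_eq_self_of_mul_eq_self (htp : t * p = p) (n : ℕ) : t ^ n * p = p := by
  induction n with
  | zero => rw [pow_zero, one_mul]
  | succ n ih => rw [pow_succ, mul_assoc, htp, ih]

theorem sub_pow_succ_of_mul_eq_self (hpp : p * p = p) (htp : t * p = p) (hpt : p * t = p)
    (n : ℕ) : (t - p) ^ (n + 1) = t ^ (n + 1) - p := by
  induction n with
  | zero => rw [zero_add, pow_one, pow_one]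
  | succ n ih =>
    rw [pow_succ, ih, sub_mul, mul_sub, mul_sub, ← pow_succ,
      pow_mul_eq_self_of_mul_eq_self htp, hpt, hpp]
    abel

end Ring

section Spectrum

variable {A : Type*} [NormedRing A]

theorem spectralRadius_lt_one_of_norm_pow_lt_one {𝕜 : Type*} [NormedField 𝕜]
    [NormedAlgebra 𝕜 A] [CompleteSpace A] (h1 : ‖(1 : A)‖ ≤ 1) {a : A} {n : ℕ}
    (ha : ‖a ^ (n + 1)‖ < 1) : spectralRadius 𝕜 a < 1 := by
  have ha' : (‖a ^ (n + 1)‖₊ : ENNReal) < 1 := mod_cast ha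
  have h1' : (‖(1 : A)‖₊ : ENNReal) ≤ 1 := mod_cast h1
  have hexp : (0 : ℝ) < 1 / (n + 1 : ℝ) := by positivity
  calc spectralRadius 𝕜 a
      ≤ (‖a ^ (n + 1)‖₊ : ENNReal) ^ (1 / (n + 1) : ℝ) *
          (‖(1 : A)‖₊ : ENNReal) ^ (1 / (n + 1) : ℝ) :=
        spectrum.spectralRadius_le_pow_nnnorm_pow_one_div 𝕜 a n
    _ ≤ (‖a ^ (n + 1)‖₊ : ENNReal) ^ (1 / (n + 1) : ℝ) := by
        grw [h1', ENNReal.one_rpow, mul_one]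
    _ < 1 := ENNReal.rpow_lt_one ha' hexp

theorem tendsto_norm_pow_of_spectralRadius_lt_one [NormedAlgebra ℂ A] [CompleteSpace A] {a : A}
    (ha : spectralRadius ℂ a < 1) : Tendsto (fun n : ℕ => ‖a ^ n‖) atTop (𝓝 0) := by
  obtain ⟨r, hρr, hr1⟩ := ENNReal.lt_iff_exists_nnreal_btwn.mp ha
  have hbound : ∀ᶠ n : ℕ in atTop, ‖a ^ n‖ ≤ (r : ℝ) ^ n := by
    filter_upwards [(spectrum.pow_nnnorm_pow_one_div_tendsto_nhds_spectralRadius a).eventually_lt_const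
      hρr, eventually_ge_atTop 1] with n hn hn1
    rw [one_div, ENNReal.rpow_inv_lt_iff (by positivity), ENNReal.rpow_natCast] at hn
    exact_mod_cast hn.le
  exact squeeze_zero' (Eventually.of_forall fun n => norm_nonneg _) hbound
    (tendsto_pow_atTop_nhds_zero_of_lt_one r.coe_nonneg (mod_cast hr1))

theorem tendsto_norm_pow_iff_spectralRadius_lt_one [NormedAlgebra ℂ A] [CompleteSpace A]
    (h1 : ‖(1 : A)‖ ≤ 1) (a : A) :
    Tendsto (fun n : ℕ => ‖a ^ n‖) atTop (𝓝 0) ↔ spectralRadius ℂ a < 1 := by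
  refine ⟨fun h => ?_, tendsto_norm_pow_of_spectralRadius_lt_one⟩
  obtain ⟨n, hn⟩ := ((tendsto_add_atTop_iff_nat 1).mpr h |>.eventually_lt_const one_pos).exists
  exact spectralRadius_lt_one_of_norm_pow_lt_one h1 hn

end Spectrum

namespace dobrushinCoeff

variable {X : Type*} [NormedAddCommGroup X] [NormedSpace ℂ X] (P S : X →L[ℂ] X)

private theorem bddAbove_set :
    BddAbove {r : ℝ | ∃ x : X, P x = 0 ∧ ‖x‖ ≤ 1 ∧ r = ‖S x‖} := by
  refine ⟨‖S‖, ?_⟩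
  rintro r ⟨x, -, hx, rfl⟩
  simpa using S.le_opNorm_of_le hx

theorem nonneg : 0 ≤ dobrushinCoeff P S :=
  le_csSup (bddAbove_set P S) ⟨0, by simp⟩

theorem le_norm_sub : dobrushinCoeff P S ≤ ‖S - P‖ := by
  refine Real.sSup_le ?_ (norm_nonneg _)
  rintro r ⟨x, hPx, hx, rfl⟩
  have hSx : S x = (S - P) x := by rw [sub_apply, hPx, sub_zero]
  rw [hSx]
  simpa using (S - P).le_opNorm_of_le hx

variable {P S}

theorem norm_apply_le_mul {y : X} (hy : P y = 0) : ‖S y‖ ≤ dobrushinCoeff P S * ‖y‖ := by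
  rcases eq_or_ne y 0 with rfl | hy0
  · simp
  have hny : 0 < ‖y‖ := norm_pos_iff.mpr hy0
  set c : ℂ := ((‖y‖⁻¹ : ℝ) : ℂ)
  have hc : ‖c‖ = ‖y‖⁻¹ := by simp [c]
  have hcy : ‖S (c • y)‖ ≤ dobrushinCoeff P S := by
    refine le_csSup (bddAbove_set P S) ⟨c • y, ?_, ?_, rfl⟩
    · rw [map_smul, hy, smul_zero]
    · rw [norm_smul, hc, inv_mul_cancel₀ hny.ne']
  rw [map_smul, norm_smul, hc, inv_mul_le_iff₀ hny] at hcy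
  linarith

theorem norm_sub_le_mul (hPP : P * P = P) (hSP : S * P = P) :
    ‖S - P‖ ≤ (1 + ‖P‖) * dobrushinCoeff P S := by
  refine (S - P).opNorm_le_bound (by have := nonneg P S; positivity) fun x => ?_
  have hker : P (x - P x) = 0 := by
    rw [map_sub, ← mul_apply_eq_comp, hPP, sub_self]
  have hSx : (S - P) x = S (x - P x) := by
    rw [map_sub, ← mul_apply_eq_comp S, hSP, sub_apply]
  have hnorm : ‖x - P x‖ ≤ (1 + ‖P‖) * ‖x‖ := by
    grw [norm_sub_le, P.le_opNorm]
    exact (one_add_mul _ _).ge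
  rw [hSx]
  calc ‖S (x - P x)‖ ≤ dobrushinCoeff P S * ‖x - P x‖ := norm_apply_le_mul hker
    _ ≤ dobrushinCoeff P S * ((1 + ‖P‖) * ‖x‖) := by have := nonneg P S; gcongr
    _ = (1 + ‖P‖) * dobrushinCoeff P S * ‖x‖ := by ring

theorem tendsto_zero_iff_tendsto_norm_sub {ι : Type*} {l : Filter ι} {S : ι → X →L[ℂ] X}
    (hPP : P * P = P) (hSP : ∀ i, S i * P = P) :
    Tendsto (fun i => dobrushinCoeff P (S i)) l (𝓝 0) ↔ Tendsto (fun i => ‖S i - P‖) l (𝓝 0) := by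
  constructor
  · intro h
    refine squeeze_zero (fun i => norm_nonneg _) (fun i => norm_sub_le_mul hPP (hSP i)) ?_
    simpa using h.const_mul (1 + ‖P‖)
  · exact fun h => squeeze_zero (fun i => nonneg P (S i)) (fun i => le_norm_sub P (S i)) h

end dobrushinCoeff

theorem stmt8_general {X : Type*} [NormedAddCommGroup X] [NormedSpace ℂ X] [CompleteSpace X]
    (T P : X →L[ℂ] X)
    (hProj : P.comp P = P) (hComm : P.comp T = T.comp P) (hTP : T.comp P = P) :
    Tendsto (fun n : ℕ => dobrushinCoeff P (T ^ n)) atTop (𝓝 0) ↔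
      spectralRadius ℂ (T - P) < 1 := by
  have hPP : P * P = P := hProj
  have hTP' : T * P = P := hTP
  have hPT : P * T = P := hComm.trans hTP
  rw [dobrushinCoeff.tendsto_zero_iff_tendsto_norm_sub hPP
      (pow_mul_eq_self_of_mul_eq_self hTP'),
    ← tendsto_norm_pow_iff_spectralRadius_lt_one ContinuousLinearMap.norm_id_le,
    ← tendsto_add_atTop_iff_nat 1, ← tendsto_add_atTop_iff_nat (f := fun n => ‖(T - P) ^ n‖) 1]
  simp_rw [sub_pow_succ_of_mul_eq_self hPP hTP' hPT]

theorem stmt8 {X : Type*} [NormedAddCommGroup X] [NormedSpace ℂ X] [CompleteSpace X]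
    (T P : X →L[ℂ] X) (hT : ‖T‖ ≤ 1) (hPnorm : ‖P‖ ≤ 1)
    (hProj : P.comp P = P) (hComm : P.comp T = T.comp P) (hTP : T.comp P = P) :
    Tendsto (fun n : ℕ => dobrushinCoeff P (T ^ n)) atTop (𝓝 0) ↔
      spectralRadius ℂ (T - P) < 1 :=
  stmt8_general T P hProj hComm hTP
end
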